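/- arXiv:2410.04301 — 4 statements merged into one kernel-verified Lean document; each statement's English description precedes it below -/
import Mathlib

section
/- In the opinion dynamics model with group pressure, the opinion diameter R(t) = max_{i,j} ‖ξⁱ(t) − ξʲ(t)‖ satisfies the contraction inequality R(t+1) ≤ (1 − p_*(t))·R(t), where p_*(t) = minᵢ pᵢ(t). -/
open Finset

/-- Contraction of the opinion diameter: `R (t+1) ≤ (1 - p_*(t)) * R t`. -/
theorem diameter_contraction (d n : ℕ) [NeZero n]
    (ξ : ℕ → Fin n → EuclideanSpace ℝ (Fin d))
    (p : ℕ → Fin n → ℝ) (w : ℕ → Fin n → Fin n → ℝ)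
    (pub : ℕ → EuclideanSpace ℝ (Fin d))
    (hw0 : ∀ t i j, 0 ≤ w t i j)
    (hw1 : ∀ t i, ∑ j, w t i j = 1)
    (hp : ∀ t i, p t i ∈ Set.Icc (0 : ℝ) 1)
    (hpub : ∀ t, pub t ∈ convexHull ℝ (Set.range (ξ t)))
    (hupd : ∀ t i, ξ (t + 1) i = p t i • pub t + (1 - p t i) • ∑ j, w t i j • ξ t j)
    (R : ℕ → ℝ)
    (hR : ∀ t, R t = Finset.univ.sup' Finset.univ_nonempty
        (fun i => Finset.univ.sup' Finset.univ_nonempty fun j => ‖ξ t i - ξ t j‖))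
    (pstar : ℕ → ℝ)
    (hpstar : ∀ t, pstar t = Finset.univ.inf' Finset.univ_nonempty (p t)) :
    ∀ t, R (t + 1) ≤ (1 - pstar t) * R t := by
  intro t
  set S := Set.range (ξ t) with hS
  have hRd : ∀ k l, ‖ξ t k - ξ t l‖ ≤ R t := by
    intro k l
    rw [hR]
    exact (Finset.le_sup' (fun j => ‖ξ t k - ξ t j‖) (mem_univ l)).trans
      (Finset.le_sup' (fun i => Finset.univ.sup' Finset.univ_nonempty
        fun j => ‖ξ t i - ξ t j‖) (mem_univ k))
  obtain ⟨i0, -⟩ := Finset.univ_nonempty (α := Fin n)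
  have hR0 : 0 ≤ R t := (norm_nonneg _).trans (hRd i0 i0)
  -- any two points of the convex hull are within distance R t
  have hball : ∀ x ∈ convexHull ℝ S, ∀ y ∈ convexHull ℝ S, ‖x - y‖ ≤ R t := by
    intro x hx
    have hxk : ∀ k, ‖x - ξ t k‖ ≤ R t := by
      intro k
      have hsub : convexHull ℝ S ⊆ Metric.closedBall (ξ t k) (R t) := by
        apply convexHull_min
        · rintro _ ⟨l, rfl⟩
          simpa [Metric.mem_closedBall, dist_eq_norm] using hRd l k
        · exact convex_closedBall _ _
      have := hsub hx
      rwa [Metric.mem_closedBall, dist_eq_norm] at this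
    intro y hy
    have hsub : convexHull ℝ S ⊆ Metric.closedBall x (R t) := by
      apply convexHull_min
      · rintro _ ⟨k, rfl⟩
        simpa [Metric.mem_closedBall, dist_eq_norm, norm_sub_rev] using hxk k
      · exact convex_closedBall _ _
    have := hsub hy
    rw [Metric.mem_closedBall, dist_eq_norm] at this
    rwa [norm_sub_rev] at this
  have hη : ∀ i, (∑ j, w t i j • ξ t j) ∈ convexHull ℝ S := by
    intro i
    apply Convex.sum_mem (convex_convexHull ℝ S)
    · intro j _; exact hw0 t i j
    · exact hw1 t i
    · intro j _; exact subset_convexHull ℝ S ⟨j, rfl⟩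
  have key : ∀ i j, p t j ≤ p t i →
      ‖ξ (t + 1) i - ξ (t + 1) j‖ ≤ (1 - p t j) * R t := by
    intro i j hij
    rw [hupd t i, hupd t j]
    set a := p t i with ha
    set b := p t j with hb
    set ei := ∑ k, w t i k • ξ t k with hei
    set ej := ∑ k, w t j k • ξ t k with hej
    have ha1 : a ≤ 1 := (hp t i).2
    have heq : a • pub t + (1 - a) • ei - (b • pub t + (1 - b) • ej)
        = (1 - a) • (ei - ej) + (a - b) • (pub t - ej) := by
      module
    have h1 : ‖ei - ej‖ ≤ R t := hball _ (hη i) _ (hη j)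
    have h2 : ‖pub t - ej‖ ≤ R t := hball _ (hpub t) _ (hη j)
    calc ‖a • pub t + (1 - a) • ei - (b • pub t + (1 - b) • ej)‖
        = ‖(1 - a) • (ei - ej) + (a - b) • (pub t - ej)‖ := by rw [heq]
      _ ≤ ‖(1 - a) • (ei - ej)‖ + ‖(a - b) • (pub t - ej)‖ := norm_add_le _ _
      _ = (1 - a) * ‖ei - ej‖ + (a - b) * ‖pub t - ej‖ := by
          rw [norm_smul, norm_smul, Real.norm_of_nonneg (by linarith),
            Real.norm_of_nonneg (by linarith)]
      _ ≤ (1 - a) * R t + (a - b) * R t := by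
          gcongr <;> linarith
      _ = (1 - b) * R t := by ring
  have hps : ∀ i, pstar t ≤ p t i := by
    intro i; rw [hpstar]; exact Finset.inf'_le _ (mem_univ i)
  rw [hR]
  apply Finset.sup'_le
  intro i _
  apply Finset.sup'_le
  intro j _
  rcases le_total (p t j) (p t i) with h | h
  · exact (key i j h).trans (mul_le_mul_of_nonneg_right (by linarith [hps j]) hR0)
  · rw [norm_sub_rev]
    exact (key j i h).trans (mul_le_mul_of_nonneg_right (by linarith [hps i]) hR0)
end

section
/- In the opinion dynamics model with group pressure, if ∑_{t=0}^∞ p_*(t) = +∞ where p_*(t) = minᵢ pᵢ(t), then all opinions asymptotically converge to a common limit: there exists ξ* ∈ ℝᵈ with lim_{t→∞} ξⁱ(t) = ξ* for every agent i. -/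
/-!
Every updated opinion is a convex combination of the public opinion and a weighted average of
the current opinions, so the convex hulls of the opinion profiles are nested. Comparing two
agents, the one with the larger conformity `pᵢ` differs from the other by a `(1 - pᵢ)`-multiple
of a difference of two hull points plus a `(pᵢ - pⱼ)`-multiple of another one, so the diameter
contracts by the factor `1 - p_*(t) ≤ exp (-p_*(t))` at each step. Divergence of `∑ p_*(t)`
drives the diameter to `0`, and nested sets of vanishing diameter squeeze every trajectory
to a common limit.
-/

open Finset Filter Metric Topology

theorem le_mul_exp_neg_sum_of_le_one_sub_mul {D a : ℕ → ℝ} (hD : ∀ t, 0 ≤ D t)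
    (h : ∀ t, D (t + 1) ≤ (1 - a t) * D t) (t : ℕ) :
    D t ≤ D 0 * Real.exp (-∑ s ∈ range t, a s) := by
  induction t with
  | zero => simp
  | succ t ih =>
    calc D (t + 1) ≤ (1 - a t) * D t := h t
      _ ≤ Real.exp (-a t) * D t := by gcongr; exacts [hD t, Real.one_sub_le_exp_neg _]
      _ ≤ Real.exp (-a t) * (D 0 * Real.exp (-∑ s ∈ range t, a s)) := by gcongr
      _ = D 0 * Real.exp (-∑ s ∈ range (t + 1), a s) := by
        rw [sum_range_succ, neg_add, Real.exp_add]; ring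

theorem tendsto_zero_of_le_one_sub_mul {D a : ℕ → ℝ} (hD : ∀ t, 0 ≤ D t)
    (h : ∀ t, D (t + 1) ≤ (1 - a t) * D t)
    (ha : Tendsto (fun T => ∑ t ∈ range T, a t) atTop atTop) :
    Tendsto D atTop (𝓝 0) := by
  have hexp : Tendsto (fun t => D 0 * Real.exp (-∑ s ∈ range t, a s)) atTop (𝓝 0) := by
    simpa using (Real.tendsto_exp_atBot.comp (tendsto_neg_atBot_iff.mpr ha)).const_mul (D 0)
  exact squeeze_zero hD (le_mul_exp_neg_sum_of_le_one_sub_mul hD h) hexp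

theorem exists_tendsto_of_mem_antitone_of_diam_tendsto_zero {α ι : Type*} [MetricSpace α]
    [CompleteSpace α] [Nonempty ι] {S : ℕ → Set α} (hS : Antitone S)
    (hbdd : ∀ t, Bornology.IsBounded (S t)) (hdiam : Tendsto (fun t => diam (S t)) atTop (𝓝 0))
    {x : ℕ → ι → α} (hx : ∀ t i, x t i ∈ S t) :
    ∃ z, ∀ i, Tendsto (fun t => x t i) atTop (𝓝 z) := by
  obtain ⟨i₀⟩ := ‹Nonempty ι›
  have hcauchy : CauchySeq (fun t => x t i₀) :=
    cauchySeq_of_le_tendsto_0' _ (fun s t hst =>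
      dist_le_diam_of_mem (hbdd s) (hx s i₀) (hS hst (hx t i₀))) hdiam
  obtain ⟨z, hz⟩ := cauchySeq_tendsto_of_complete hcauchy
  refine ⟨z, fun i => hz.congr_dist ?_⟩
  exact squeeze_zero (fun _ => dist_nonneg)
    (fun t => dist_le_diam_of_mem (hbdd t) (hx t i₀) (hx t i)) hdiam

section ConvexHull

variable {E ι : Type*} [NormedAddCommGroup E] [NormedSpace ℝ E]

theorem sum_smul_mem_convexHull_range [Fintype ι] {w : ι → ℝ} (hw0 : ∀ j, 0 ≤ w j)
    (hw1 : ∑ j, w j = 1) (x : ι → E) :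
    ∑ j, w j • x j ∈ convexHull ℝ (Set.range x) :=
  (convex_convexHull ℝ _).sum_mem (fun j _ => hw0 j) hw1
    (fun j _ => subset_convexHull ℝ _ (Set.mem_range_self j))

theorem isBounded_convexHull_range [Finite ι] (x : ι → E) :
    Bornology.IsBounded (convexHull ℝ (Set.range x)) :=
  isBounded_convexHull.2 (Set.finite_range x).isBounded

theorem dist_le_diam_range_of_mem_convexHull [Finite ι] {x : ι → E} {a b : E}
    (ha : a ∈ convexHull ℝ (Set.range x)) (hb : b ∈ convexHull ℝ (Set.range x)) :
    dist a b ≤ diam (Set.range x) :=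
  convexHull_diam (Set.range x) ▸ dist_le_diam_of_mem (isBounded_convexHull_range x) ha hb

theorem dist_smul_add_one_sub_smul_le_of_le {a b c : E} {q r D : ℝ} (hqr : q ≤ r) (hr : r ≤ 1)
    (hab : dist a b ≤ D) (hcb : dist c b ≤ D) :
    dist (r • c + (1 - r) • a) (q • c + (1 - q) • b) ≤ (1 - q) * D := by
  have hdecomp : r • c + (1 - r) • a - (q • c + (1 - q) • b) =
      (1 - r) • (a - b) + (r - q) • (c - b) := by module
  rw [dist_eq_norm, hdecomp]
  calc ‖(1 - r) • (a - b) + (r - q) • (c - b)‖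
      ≤ (1 - r) * dist a b + (r - q) * dist c b := by
        refine (norm_add_le _ _).trans ?_
        rw [norm_smul, norm_smul, Real.norm_of_nonneg (sub_nonneg.2 hr),
          Real.norm_of_nonneg (sub_nonneg.2 hqr), dist_eq_norm, dist_eq_norm]
    _ ≤ (1 - r) * D + (r - q) * D := by
        gcongr
    _ = (1 - q) * D := by ring

theorem diam_range_le_one_sub_mul_diam [Finite ι] [Nonempty ι] {x y a : ι → E} {c : E}
    {p : ι → ℝ} {q : ℝ} (hp : ∀ i, p i ≤ 1) (hq : ∀ i, q ≤ p i)
    (hc : c ∈ convexHull ℝ (Set.range x)) (ha : ∀ i, a i ∈ convexHull ℝ (Set.range x))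
    (hy : ∀ i, y i = p i • c + (1 - p i) • a i) :
    diam (Set.range y) ≤ (1 - q) * diam (Set.range x) := by
  have hdist : ∀ i j, p j ≤ p i → dist (y i) (y j) ≤ (1 - q) * diam (Set.range x) := by
    intro i j hji
    rw [hy, hy]
    refine (dist_smul_add_one_sub_smul_le_of_le hji (hp i)
      (dist_le_diam_range_of_mem_convexHull (ha i) (ha j))
      (dist_le_diam_range_of_mem_convexHull hc (ha j))).trans ?_
    exact mul_le_mul_of_nonneg_right (by linarith [hq j]) diam_nonneg
  refine diam_le_of_forall_dist_le_of_nonempty (Set.range_nonempty y) ?_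
  rintro _ ⟨i, rfl⟩ _ ⟨j, rfl⟩
  rcases le_total (p j) (p i) with hji | hij
  · exact hdist i j hji
  · exact dist_comm (y i) (y j) ▸ hdist j i hij

end ConvexHull

/-- If the minimal conformity levels are not summable (`∑ p_*(t) = +∞`), then all
opinions in the group-pressure dynamics converge to a common limit. -/
theorem consensus_of_divergent_conformity (d n : ℕ) [NeZero n]
    (ξ : ℕ → Fin n → EuclideanSpace ℝ (Fin d))
    (p : ℕ → Fin n → ℝ) (w : ℕ → Fin n → Fin n → ℝ)
    (pub : ℕ → EuclideanSpace ℝ (Fin d))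
    (hw0 : ∀ t i j, 0 ≤ w t i j)
    (hw1 : ∀ t i, ∑ j, w t i j = 1)
    (hp : ∀ t i, p t i ∈ Set.Icc (0 : ℝ) 1)
    (hpub : ∀ t, pub t ∈ convexHull ℝ (Set.range (ξ t)))
    (hupd : ∀ t i, ξ (t + 1) i = p t i • pub t + (1 - p t i) • ∑ j, w t i j • ξ t j)
    (hdiv : Tendsto (fun T => ∑ t ∈ Finset.range T,
        Finset.univ.inf' Finset.univ_nonempty (p t)) atTop atTop) :
    ∃ ξstar : EuclideanSpace ℝ (Fin d),
      ∀ i, Tendsto (fun t => ξ t i) atTop (nhds ξstar) := by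
  set K : ℕ → Set (EuclideanSpace ℝ (Fin d)) := fun t => convexHull ℝ (Set.range (ξ t))
  have havg : ∀ t i, ∑ j, w t i j • ξ t j ∈ K t := fun t i =>
    sum_smul_mem_convexHull_range (hw0 t i) (hw1 t i) (ξ t)
  have hstep : ∀ t i, ξ (t + 1) i ∈ K t := by
    intro t i
    rw [hupd]
    exact convex_convexHull ℝ _ (hpub t) (havg t i) (hp t i).1 (sub_nonneg.2 (hp t i).2)
      (by ring)
  have hcontract : ∀ t, diam (Set.range (ξ (t + 1))) ≤
      (1 - univ.inf' univ_nonempty (p t)) * diam (Set.range (ξ t)) := fun t =>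
    diam_range_le_one_sub_mul_diam (fun i => (hp t i).2) (fun i => inf'_le _ (mem_univ i))
      (hpub t) (havg t) (hupd t)
  have hdiam : Tendsto (fun t => diam (K t)) atTop (𝓝 0) := by
    simpa only [K, convexHull_diam] using
      tendsto_zero_of_le_one_sub_mul (D := fun t => diam (Set.range (ξ t)))
        (a := fun t => univ.inf' univ_nonempty (p t)) (fun _ => diam_nonneg) hcontract hdiv
  exact exists_tendsto_of_mem_antitone_of_diam_tendsto_zero
    (antitone_nat_of_succ_le fun t => convexHull_min (Set.range_subset_iff.2 (hstep t))
      (convex_convexHull ℝ _))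
    (fun t => isBounded_convexHull_range (ξ t)) hdiam
    (fun t i => subset_convexHull ℝ _ (Set.mem_range_self i))
end

section
/- Under the group-pressure dynamics with underlying Hegselmann–Krause model (minimal confidence radius ε) and mean-value public opinion, if p_*(t) ≥ p₀ > 0 for all t, then exact consensus is reached in finite time, at latest by time 𝒯(ε, R₀, p₀) + 1, where 𝒯(ε,R₀,p₀) = 0 if ε ≥ R₀ and ⌈(log ε − log R₀)/log(1−p₀)⌉ otherwise, with R₀ the initial opinion diameter. -/
/-!
Written as one convex combination of the current opinions, the update of every agent gives each
opinion weight at least `p₀ / n`, through the public opinion alone. Two convex combinations that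
share a common part of total mass `p₀` differ by at most `1 - p₀` times the diameter of the
points, so the opinion diameter satisfies `R(t) ≤ (1 - p₀)ᵗ R₀`. From time `𝒯(ε, R₀, p₀)` on it
is at most `ε`, so every agent sees all the others, every Hegselmann–Krause average is the mean
opinion, and one step later all agents sit at that mean.
-/

open Finset

section ConvexCombination

variable {ι E : Type*} [Fintype ι] [NormedAddCommGroup E] [NormedSpace ℝ E]

theorem norm_sum_smul_sub_sum_smul_le_of_sum_eq {x : ι → E} {a b : ι → ℝ} {s D : ℝ}
    (ha : ∀ k, 0 ≤ a k) (hb : ∀ k, 0 ≤ b k) (hsa : ∑ k, a k = s) (hsb : ∑ k, b k = s)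
    (hD : ∀ k l, ‖x k - x l‖ ≤ D) :
    ‖∑ k, a k • x k - ∑ k, b k • x k‖ ≤ s * D := by
  rcases (hsa ▸ sum_nonneg fun k _ => ha k : 0 ≤ s).eq_or_lt with rfl | hs
  · have ha0 := (sum_eq_zero_iff_of_nonneg fun k _ => ha k).1 hsa
    have hb0 := (sum_eq_zero_iff_of_nonneg fun k _ => hb k).1 hsb
    simp [ha0 _ (mem_univ _), hb0 _ (mem_univ _)]
  · -- Both sums are `s` times points of the convex hull of the `x k`, and two points of a convex
    -- hull are no farther apart than some two of its generators.
    have hmem : ∀ c : ι → ℝ, (∀ k, 0 ≤ c k) → ∑ k, c k = s →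
        univ.centerMass c x ∈ convexHull ℝ (Set.range x) := fun c hc hcs =>
      univ.centerMass_mem_convexHull (fun k _ => hc k) (hcs ▸ hs) fun k _ => ⟨k, rfl⟩
    obtain ⟨_, ⟨k, rfl⟩, _, ⟨l, rfl⟩, hkl⟩ :=
      convexHull_exists_dist_ge2 (hmem a ha hsa) (hmem b hb hsb)
    have hcm : ∀ c : ι → ℝ, ∑ k, c k = s → ∑ k, c k • x k = s • univ.centerMass c x :=
      fun c hcs => by rw [centerMass, hcs, smul_inv_smul₀ hs.ne']
    rw [hcm a hsa, hcm b hsb, ← smul_sub, norm_smul, Real.norm_of_nonneg hs.le, ← dist_eq_norm]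
    exact mul_le_mul_of_nonneg_left (hkl.trans ((dist_eq_norm _ _).trans_le (hD k l))) hs.le

theorem norm_sum_smul_sub_sum_smul_le_of_le {x : ι → E} {a b : ι → ℝ} {δ D : ℝ}
    (ha : ∀ k, δ ≤ a k) (hb : ∀ k, δ ≤ b k) (hsa : ∑ k, a k = 1) (hsb : ∑ k, b k = 1)
    (hD : ∀ k l, ‖x k - x l‖ ≤ D) :
    ‖∑ k, a k • x k - ∑ k, b k • x k‖ ≤ (1 - Fintype.card ι * δ) * D := by
  have hsum : ∀ c : ι → ℝ, ∑ k, c k = 1 → ∑ k, (c k - δ) = 1 - Fintype.card ι * δ :=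
    fun c hc => by simp [sum_sub_distrib, hc]
  have hshift : ∑ k, a k • x k - ∑ k, b k • x k
      = ∑ k, (a k - δ) • x k - ∑ k, (b k - δ) • x k := by
    simp only [sub_smul, sum_sub_distrib]
    abel
  rw [hshift]
  exact norm_sum_smul_sub_sum_smul_le_of_sum_eq (fun k => sub_nonneg.2 (ha k))
    (fun k => sub_nonneg.2 (hb k)) (hsum a hsa) (hsum b hsb) hD

end ConvexCombination

section HegselmannKrause

variable {ι E : Type*} [Fintype ι] [SeminormedAddGroup E]

noncomputable def hkWeight (r : ℝ) (x : ι → E) (i j : ι) : ℝ :=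
  if ‖x j - x i‖ ≤ r then ((univ.filter fun k => ‖x k - x i‖ ≤ r).card : ℝ)⁻¹ else 0

theorem hkWeight_nonneg (r : ℝ) (x : ι → E) (i j : ι) : 0 ≤ hkWeight r x i j := by
  unfold hkWeight
  split_ifs <;> positivity

theorem sum_hkWeight {r : ℝ} (hr : 0 ≤ r) (x : ι → E) (i : ι) : ∑ j, hkWeight r x i j = 1 := by
  have hi : i ∈ univ.filter fun k => ‖x k - x i‖ ≤ r := by simp [hr]
  simp only [hkWeight]
  rw [← sum_filter, sum_const, nsmul_eq_mul,
    mul_inv_cancel₀ (by exact_mod_cast (card_pos.2 ⟨i, hi⟩).ne')]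

theorem hkWeight_eq_inv_card {r : ℝ} {x : ι → E} {i : ι} (h : ∀ k, ‖x k - x i‖ ≤ r) (j : ι) :
    hkWeight r x i j = (Fintype.card ι : ℝ)⁻¹ := by
  rw [hkWeight, if_pos (h j), filter_true_of_mem fun k _ => h k, card_univ]

end HegselmannKrause

section GroupPressure

variable {ι E : Type*} [Fintype ι] [NormedAddCommGroup E] [NormedSpace ℝ E]

/-- `ξⁱ(t+1)` of the paper, with `ξ^pub` the mean opinion and `ηⁱ` the Hegselmann–Krause
average `∑ j, hkWeight (r i) x i j • x j`. -/
noncomputable def groupPressureStep (r q : ι → ℝ) (x : ι → E) (i : ι) : E :=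
  q i • ((Fintype.card ι : ℝ)⁻¹ • ∑ j, x j) + (1 - q i) • ∑ j, hkWeight (r i) x i j • x j

theorem groupPressureStep_eq_sum (r q : ι → ℝ) (x : ι → E) (i : ι) :
    groupPressureStep r q x i
      = ∑ k, (q i * (Fintype.card ι : ℝ)⁻¹ + (1 - q i) * hkWeight (r i) x i k) • x k := by
  simp only [groupPressureStep, smul_sum, smul_smul, add_smul, sum_add_distrib]

theorem norm_groupPressureStep_sub_le {r q : ι → ℝ} {x : ι → E} {p₀ D : ℝ}
    (hr : ∀ i, 0 ≤ r i) (hq : ∀ i, q i ∈ Set.Icc p₀ 1) (hD : ∀ k l, ‖x k - x l‖ ≤ D) (i j : ι) :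
    ‖groupPressureStep r q x i - groupPressureStep r q x j‖ ≤ (1 - p₀) * D := by
  have hcard : (Fintype.card ι : ℝ) ≠ 0 := by
    have : Nonempty ι := ⟨i⟩
    exact_mod_cast Fintype.card_ne_zero
  have hlow : ∀ i k, p₀ * (Fintype.card ι : ℝ)⁻¹
      ≤ q i * (Fintype.card ι : ℝ)⁻¹ + (1 - q i) * hkWeight (r i) x i k := fun i k => by
    have := mul_nonneg (sub_nonneg.2 (hq i).2) (hkWeight_nonneg (r i) x i k)
    have := mul_le_mul_of_nonneg_right (hq i).1 (inv_nonneg.2 (Nat.cast_nonneg (Fintype.card ι)))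
    linarith
  have hsum : ∀ i, ∑ k, (q i * (Fintype.card ι : ℝ)⁻¹ + (1 - q i) * hkWeight (r i) x i k) = 1 :=
    fun i => by
      rw [sum_add_distrib, ← mul_sum, ← mul_sum, sum_hkWeight (hr i), sum_const, card_univ,
        nsmul_eq_mul, mul_inv_cancel₀ hcard]
      ring
  have := norm_sum_smul_sub_sum_smul_le_of_le (hlow i) (hlow j) (hsum i) (hsum j) hD
  rwa [mul_left_comm, mul_inv_cancel₀ hcard, mul_one, ← groupPressureStep_eq_sum,
    ← groupPressureStep_eq_sum] at this

theorem groupPressureStep_eq_mean {r q : ι → ℝ} {x : ι → E} {i : ι}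
    (h : ∀ k l, ‖x k - x l‖ ≤ r i) :
    groupPressureStep r q x i = (Fintype.card ι : ℝ)⁻¹ • ∑ j, x j := by
  simp only [groupPressureStep, hkWeight_eq_inv_card fun k => h k i, ← smul_sum, ← add_smul,
    add_sub_cancel, one_smul]

theorem norm_sub_le_pow_mul_of_groupPressureStep {r : ι → ℝ} {q : ℕ → ι → ℝ} {x : ℕ → ι → E}
    {p₀ D : ℝ} (hr : ∀ i, 0 ≤ r i) (hq : ∀ t i, q t i ∈ Set.Icc p₀ 1)
    (hx : ∀ t, x (t + 1) = groupPressureStep r (q t) (x t)) (h₀ : ∀ i j, ‖x 0 i - x 0 j‖ ≤ D)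
    (t : ℕ) (i j : ι) : ‖x t i - x t j‖ ≤ (1 - p₀) ^ t * D := by
  induction t generalizing i j with
  | zero => simpa using h₀ i j
  | succ t ih =>
    rw [hx, pow_succ', mul_assoc]
    exact norm_groupPressureStep_sub_le hr (hq t) ih i j

end GroupPressure

/-- The time `𝒯(ε, R₀, p₀)` of the paper. -/
noncomputable def contractionTime (ε R₀ p₀ : ℝ) : ℤ :=
  if R₀ ≤ ε then 0 else ⌈(Real.log ε - Real.log R₀) / Real.log (1 - p₀)⌉

theorem contractionTime_nonneg {ε R₀ p₀ : ℝ} (hε : 0 < ε) (hp₀ : 0 ≤ p₀) (hp₁ : p₀ ≤ 1) :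
    0 ≤ contractionTime ε R₀ p₀ := by
  unfold contractionTime
  split_ifs with hR
  · rfl
  · exact Int.ceil_nonneg <| div_nonneg_of_nonpos
      (sub_nonpos.2 (Real.log_le_log hε (not_le.1 hR).le))
      (Real.log_nonpos (by linarith) (by linarith))

theorem pow_mul_le_of_contractionTime_le {ε R₀ p₀ : ℝ} {s : ℕ} (hε : 0 < ε) (hR₀ : 0 ≤ R₀)
    (hp₀ : 0 < p₀) (hp₁ : p₀ < 1) (hs : contractionTime ε R₀ p₀ ≤ s) :
    (1 - p₀) ^ s * R₀ ≤ ε := by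
  unfold contractionTime at hs
  split_ifs at hs with hR
  · exact (mul_le_of_le_one_left hR₀ (pow_le_one₀ (by linarith) (by linarith))).trans hR
  · have hR₀pos : 0 < R₀ := hε.trans (not_le.1 hR)
    have hq : 0 < 1 - p₀ := sub_pos.2 hp₁
    have hlog : Real.log (1 - p₀) < 0 := Real.log_neg hq (by linarith)
    have hdiv : (Real.log ε - Real.log R₀) / Real.log (1 - p₀) ≤ s := by
      exact_mod_cast Int.ceil_le.1 hs
    rw [div_le_iff_of_neg hlog] at hdiv
    rw [← Real.log_le_log_iff (by positivity) hε, Real.log_mul (by positivity) hR₀pos.ne',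
      Real.log_pow]
    linarith

/-- Finite-time consensus for the group-pressure dynamics with underlying
Hegselmann–Krause averaging, mean-value public opinion and uniformly positive
conformity levels: consensus is reached at latest by time `𝒯(ε, R₀, p₀) + 1`. -/
theorem HK_finite_time_consensus (d n : ℕ) [NeZero n]
    (ξ : ℕ → Fin n → EuclideanSpace ℝ (Fin d))
    (p : ℕ → Fin n → ℝ) (εr : Fin n → ℝ)
    (hεr : ∀ i, 0 < εr i)
    (hp : ∀ t i, p t i ∈ Set.Icc (0 : ℝ) 1)
    (w : ℕ → Fin n → Fin n → ℝ)
    (hw : ∀ t i j, w t i j =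
      if ‖ξ t j - ξ t i‖ ≤ εr i
        then ((Finset.univ.filter fun k => ‖ξ t k - ξ t i‖ ≤ εr i).card : ℝ)⁻¹
        else 0)
    (pub : ℕ → EuclideanSpace ℝ (Fin d))
    (hpub : ∀ t, pub t = (n : ℝ)⁻¹ • ∑ j, ξ t j)
    (hupd : ∀ t i, ξ (t + 1) i = p t i • pub t + (1 - p t i) • ∑ j, w t i j • ξ t j)
    (p₀ : ℝ) (hp₀ : 0 < p₀) (hlow : ∀ t i, p₀ ≤ p t i)
    (ε R₀ : ℝ)
    (hε : ε = Finset.univ.inf' Finset.univ_nonempty εr)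
    (hR₀ : R₀ = Finset.univ.sup' Finset.univ_nonempty
        (fun i => Finset.univ.sup' Finset.univ_nonempty fun j => ‖ξ 0 i - ξ 0 j‖)) :
    ∀ t : ℕ,
      (if R₀ ≤ ε then (0 : ℤ)
        else ⌈(Real.log ε - Real.log R₀) / Real.log (1 - p₀)⌉) + 1 ≤ (t : ℤ) →
      ∀ i j, ξ t i = ξ t j := by
  intro t ht i j
  change contractionTime ε R₀ p₀ + 1 ≤ t at ht
  have hstep : ∀ t, ξ (t + 1) = groupPressureStep εr (p t) (ξ t) := fun t => funext fun i => by
    simp only [hupd, hpub, hw, groupPressureStep, hkWeight, Fintype.card_fin]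
  have hinit : ∀ i j, ‖ξ 0 i - ξ 0 j‖ ≤ R₀ := fun i j =>
    hR₀ ▸ le_sup'_of_le _ (mem_univ i) (le_sup' (fun j => ‖ξ 0 i - ξ 0 j‖) (mem_univ j))
  have hdiam := norm_sub_le_pow_mul_of_groupPressureStep (fun i => (hεr i).le)
    (fun t i => ⟨hlow t i, (hp t i).2⟩) hstep hinit
  have hεpos : 0 < ε := hε ▸ (lt_inf'_iff _).2 fun i _ => hεr i
  have hp₀_le_one : p₀ ≤ 1 := (hlow 0 i).trans (hp 0 i).2
  obtain ⟨s, rfl⟩ : ∃ s, t = s + 1 :=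
    ⟨t - 1, by have := contractionTime_nonneg (R₀ := R₀) hεpos hp₀.le hp₀_le_one; omega⟩
  -- For `p₀ = 1` the bound `𝒯` is junk (`log 0 = 0`), but then the diameter vanishes at once.
  rcases hp₀_le_one.lt_or_eq with hp₀_lt_one | rfl
  · have hsmall := pow_mul_le_of_contractionTime_le (s := s) hεpos (by simpa using hinit i i)
      hp₀ hp₀_lt_one (by push_cast at ht; omega)
    have hradius : ∀ i k l, ‖ξ s k - ξ s l‖ ≤ εr i := fun i k l =>
      ((hdiam s k l).trans hsmall).trans (hε ▸ inf'_le _ (mem_univ i))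
    rw [hstep, groupPressureStep_eq_mean (hradius i), groupPressureStep_eq_mean (hradius j)]
  · exact sub_eq_zero.1 (norm_le_zero_iff.1 (by simpa using hdiam (s + 1) i j))
end

section
/- If p_*(t) ≥ p₀ > 0 for all t in the group-pressure dynamics, then the common limit consensus opinion ξ* exists and satisfies ‖ξⁱ(t) − ξ*‖ ≤ (1−p₀)ᵗ R(0) for every agent i and time t. -/
open Finset Filter

lemma hull_dist_le {E : Type*} [NormedAddCommGroup E] [NormedSpace ℝ E]
    {n : ℕ} [NeZero n] (f : Fin n → E) {x y : E}
    (hx : x ∈ convexHull ℝ (Set.range f)) (hy : y ∈ convexHull ℝ (Set.range f)) :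
    ‖x - y‖ ≤ Finset.univ.sup' Finset.univ_nonempty
      (fun i => Finset.univ.sup' Finset.univ_nonempty fun j => ‖f i - f j‖) := by
  set D := Finset.univ.sup' Finset.univ_nonempty
      (fun i => Finset.univ.sup' Finset.univ_nonempty fun j => ‖f i - f j‖) with hD
  have hD0 : (0:ℝ) ≤ D := by
    have i0 : Fin n := ⟨0, Nat.pos_of_ne_zero (NeZero.ne n)⟩
    have h1 : ‖f i0 - f i0‖ ≤ D := by
      refine le_trans ?_ (le_sup' _ (mem_univ i0))
      exact le_sup' (f := fun j => ‖f i0 - f j‖) (mem_univ i0)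
    simpa using h1
  rw [← dist_eq_norm]
  calc dist x y ≤ Metric.diam (convexHull ℝ (Set.range f)) := by
        refine Metric.dist_le_diam_of_mem ?_ hx hy
        exact isBounded_convexHull.2 (Set.finite_range f).isBounded
    _ = Metric.diam (Set.range f) := convexHull_diam _
    _ ≤ D := by
        refine Metric.diam_le_of_forall_dist_le hD0 ?_
        rintro _ ⟨i, rfl⟩ _ ⟨j, rfl⟩
        rw [dist_eq_norm]
        refine le_trans ?_ (le_sup' _ (mem_univ i))
        exact le_sup' (f := fun j => ‖f i - f j‖) (mem_univ j)


/-- With uniformly positive conformity `p_*(t) ≥ p₀ > 0`, the consensus opinion `ξ*`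
exists and every opinion converges to it at the geometric rate
`‖ξⁱ(t) - ξ*‖ ≤ (1 - p₀)^t * R 0`. -/
theorem geometric_rate_to_consensus (d n : ℕ) [NeZero n]
    (ξ : ℕ → Fin n → EuclideanSpace ℝ (Fin d))
    (p : ℕ → Fin n → ℝ) (w : ℕ → Fin n → Fin n → ℝ)
    (pub : ℕ → EuclideanSpace ℝ (Fin d))
    (hw0 : ∀ t i j, 0 ≤ w t i j)
    (hw1 : ∀ t i, ∑ j, w t i j = 1)
    (hp : ∀ t i, p t i ∈ Set.Icc (0 : ℝ) 1)
    (hpub : ∀ t, pub t ∈ convexHull ℝ (Set.range (ξ t)))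
    (hupd : ∀ t i, ξ (t + 1) i = p t i • pub t + (1 - p t i) • ∑ j, w t i j • ξ t j)
    (p₀ : ℝ) (hp₀ : 0 < p₀) (hlow : ∀ t i, p₀ ≤ p t i)
    (R₀ : ℝ)
    (hR₀ : R₀ = Finset.univ.sup' Finset.univ_nonempty
        (fun i => Finset.univ.sup' Finset.univ_nonempty fun j => ‖ξ 0 i - ξ 0 j‖)) :
    ∃ ξstar : EuclideanSpace ℝ (Fin d),
      (∀ i, Tendsto (fun t => ξ t i) atTop (nhds ξstar)) ∧
      ∀ t i, ‖ξ t i - ξstar‖ ≤ (1 - p₀) ^ t * R₀ := by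
  have i0 : Fin n := ⟨0, Nat.pos_of_ne_zero (NeZero.ne n)⟩
  set D : ℕ → ℝ := fun t => Finset.univ.sup' Finset.univ_nonempty
      (fun i => Finset.univ.sup' Finset.univ_nonempty fun j => ‖ξ t i - ξ t j‖) with hDdef
  have hp₀1 : p₀ ≤ 1 := le_trans (hlow 0 i0) (hp 0 i0).2
  have hr0 : (0:ℝ) ≤ 1 - p₀ := by linarith
  have hr1 : (1:ℝ) - p₀ < 1 := by linarith
  have hmemself : ∀ t i, ξ t i ∈ convexHull ℝ (Set.range (ξ t)) :=
    fun t i => subset_convexHull ℝ _ ⟨i, rfl⟩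
  have hD0 : ∀ t, (0:ℝ) ≤ D t := by
    intro t
    have h := hull_dist_le (ξ t) (hmemself t i0) (hmemself t i0)
    rw [sub_self, norm_zero] at h
    exact h
  have hsummem : ∀ t i, (∑ j, w t i j • ξ t j) ∈ convexHull ℝ (Set.range (ξ t)) := by
    intro t i
    exact (convex_convexHull ℝ _).sum_mem (fun j _ => hw0 t i j) (hw1 t i)
      (fun j _ => hmemself t j)
  have hmemnext : ∀ t i, ξ (t+1) i ∈ convexHull ℝ (Set.range (ξ t)) := by
    intro t i
    rw [hupd t i]
    exact (convex_convexHull ℝ _) (hpub t) (hsummem t i) (hp t i).1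
      (by linarith [(hp t i).2]) (by ring)
  have hA : Antitone (fun t => convexHull ℝ (Set.range (ξ t))) := by
    refine antitone_nat_of_succ_le fun t => ?_
    refine convexHull_min ?_ (convex_convexHull ℝ _)
    rintro _ ⟨i, rfl⟩
    exact hmemnext t i
  have hmem : ∀ t s i, t ≤ s → ξ s i ∈ convexHull ℝ (Set.range (ξ t)) :=
    fun t s i hts => hA hts (hmemself s i)
  -- contraction step
  have hcontr : ∀ t i j, ‖ξ (t+1) i - ξ (t+1) j‖ ≤ (1 - p₀) * D t := by
    intro t i j
    have key : ∀ i j : Fin n, p t i ≤ p t j → ‖ξ (t+1) i - ξ (t+1) j‖ ≤ (1 - p₀) * D t := by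
      intro i j hpij
      have hid : ξ (t+1) i - ξ (t+1) j
          = (1 - p t j) • ((∑ k, w t i k • ξ t k) - (∑ k, w t j k • ξ t k))
            + (p t j - p t i) • ((∑ k, w t i k • ξ t k) - pub t) := by
        rw [hupd t i, hupd t j]; module
      have h1 : ‖(∑ k, w t i k • ξ t k) - (∑ k, w t j k • ξ t k)‖ ≤ D t :=
        hull_dist_le (ξ t) (hsummem t i) (hsummem t j)
      have h2 : ‖(∑ k, w t i k • ξ t k) - pub t‖ ≤ D t :=
        hull_dist_le (ξ t) (hsummem t i) (hpub t)
      have hj1 : p t j ≤ 1 := (hp t j).2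
      have hpi : p₀ ≤ p t i := hlow t i
      calc ‖ξ (t+1) i - ξ (t+1) j‖
          ≤ ‖(1 - p t j) • ((∑ k, w t i k • ξ t k) - (∑ k, w t j k • ξ t k))‖
            + ‖(p t j - p t i) • ((∑ k, w t i k • ξ t k) - pub t)‖ := by
            rw [hid]; exact norm_add_le _ _
        _ = (1 - p t j) * ‖(∑ k, w t i k • ξ t k) - (∑ k, w t j k • ξ t k)‖
            + (p t j - p t i) * ‖(∑ k, w t i k • ξ t k) - pub t‖ := by
            rw [norm_smul, norm_smul, Real.norm_eq_abs, Real.norm_eq_abs,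
              abs_of_nonneg (by linarith), abs_of_nonneg (by linarith)]
        _ ≤ (1 - p t j) * D t + (p t j - p t i) * D t := by
            gcongr <;> linarith
        _ = (1 - p t i) * D t := by ring
        _ ≤ (1 - p₀) * D t := by
            have := hD0 t; nlinarith
    rcases le_total (p t i) (p t j) with h | h
    · exact key i j h
    · rw [norm_sub_rev]; exact key j i h
  have hDstep : ∀ t, D (t+1) ≤ (1 - p₀) * D t := by
    intro t
    refine sup'_le _ _ fun i _ => sup'_le _ _ fun j _ => hcontr t i j
  have hDle : ∀ t, D t ≤ (1 - p₀) ^ t * R₀ := by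
    intro t
    induction t with
    | zero => simp [hR₀, hDdef]
    | succ t ih =>
        calc D (t+1) ≤ (1 - p₀) * D t := hDstep t
          _ ≤ (1 - p₀) * ((1 - p₀) ^ t * R₀) := by gcongr
          _ = (1 - p₀) ^ (t+1) * R₀ := by ring
  -- distance within a time-t hull
  have hdist : ∀ t s i j, t ≤ s → ∀ s' , t ≤ s' → ‖ξ s i - ξ s' j‖ ≤ D t := by
    intro t s i j hts s' hts'
    exact hull_dist_le (ξ t) (hmem t s i hts) (hmem t s' j hts')
  -- each agent's sequence is Cauchy
  have hcauchy : ∀ i, CauchySeq (fun t => ξ t i) := by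
    intro i
    refine cauchySeq_of_le_geometric (1 - p₀) R₀ hr1 fun t => ?_
    rw [dist_eq_norm]
    calc ‖ξ t i - ξ (t+1) i‖ ≤ D t := hdist t t i i le_rfl (t+1) (Nat.le_succ t)
      _ ≤ (1 - p₀) ^ t * R₀ := hDle t
      _ = R₀ * (1 - p₀) ^ t := by ring
  obtain ⟨ξstar, hstar⟩ := cauchySeq_tendsto_of_complete (hcauchy i0)
  have hDtend : Tendsto (fun t => (1 - p₀) ^ t * R₀) atTop (nhds 0) := by
    have : Tendsto (fun t : ℕ => (1 - p₀) ^ t) atTop (nhds 0) :=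
      tendsto_pow_atTop_nhds_zero_of_lt_one hr0 hr1
    simpa using this.mul_const R₀
  have hconv : ∀ i, Tendsto (fun t => ξ t i) atTop (nhds ξstar) := by
    intro i
    rw [tendsto_iff_dist_tendsto_zero]
    have hd0 : Tendsto (fun t => dist (ξ t i0) ξstar) atTop (nhds 0) :=
      tendsto_iff_dist_tendsto_zero.1 hstar
    have hg : Tendsto (fun t => (1 - p₀) ^ t * R₀ + dist (ξ t i0) ξstar) atTop (nhds 0) := by
      simpa using hDtend.add hd0
    refine squeeze_zero (fun t => dist_nonneg) (fun t => ?_) hg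
    calc dist (ξ t i) ξstar ≤ dist (ξ t i) (ξ t i0) + dist (ξ t i0) ξstar := dist_triangle _ _ _
      _ ≤ (1 - p₀) ^ t * R₀ + dist (ξ t i0) ξstar := by
          have := (hdist t t i i0 le_rfl t le_rfl).trans (hDle t)
          rw [dist_eq_norm]; linarith
  refine ⟨ξstar, hconv, fun t i => ?_⟩
  have hlim : Tendsto (fun s => ‖ξ t i - ξ s i‖) atTop (nhds ‖ξ t i - ξstar‖) :=
    (tendsto_const_nhds.sub (hconv i)).norm
  have hev : ∀ᶠ s in atTop, ‖ξ t i - ξ s i‖ ≤ (1 - p₀) ^ t * R₀ := by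
    filter_upwards [eventually_ge_atTop t] with s hs
    exact (hdist t t i i le_rfl s hs).trans (hDle t)
  exact le_of_tendsto hlim hev
end
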